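/- Let (R, i, χ) be an A-ring with a right grouplike character, and assume that A is quasi-projective as a right R-module (via a ↼ r = χ(i(a) r)). If R is right FBN and A is right noetherian, then B = A^R is right FBN. -/

import Mathlib

open MulOpposite

/-- A ring `S` is right bounded if every essential right ideal of `S` contains a
nonzero two-sided ideal. Right ideals of `S` are `Sᵐᵒᵖ`-submodules of `S`. -/
def RightBounded (S : Type*) [Ring S] : Prop :=
  ∀ E : Submodule Sᵐᵒᵖ S,
    (∀ J : Submodule Sᵐᵒᵖ S, J ≠ ⊥ → E ⊓ J ≠ ⊥) →
    ∃ T : TwoSidedIdeal S, T ≠ ⊥ ∧ ∀ x ∈ T, x ∈ E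

/-- A two-sided ideal `P` of a ring `S` is prime if `P ≠ S` and
`a S b ⊆ P` implies `a ∈ P` or `b ∈ P`. -/
def TwoSidedIdeal.IsPrimeTSI {S : Type*} [Ring S] (P : TwoSidedIdeal S) : Prop :=
  P ≠ ⊤ ∧ ∀ a b : S, (∀ r : S, a * r * b ∈ P) → a ∈ P ∨ b ∈ P

/-- A ring `S` is right FBN (fully bounded noetherian) if `S` is right noetherian and
`S/P` is right bounded for every two-sided prime ideal `P` of `S`. -/
def RightFBN (S : Type*) [Ring S] : Prop :=
  IsNoetherianRing Sᵐᵒᵖ ∧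
  ∀ P : TwoSidedIdeal S, P.IsPrimeTSI → RightBounded P.ringCon.Quotient

/-!
Right multiplication by `c : A` is the action of `i c`, so `R`-submodules of `A` are right ideals
of `A`, and `B` is the ring of left multiplications commuting with the `R`-action. Quasi-projectivity
turns `b ∈ f·A + K` (with `b, f ∈ B`) into `b - f c ∈ K` for some `c ∈ B`; hence `J ↦ J·A` embeds
the right ideals of `B` into the noetherian lattice of submodules of `A`.

For boundedness of `B/P`, take `K` maximal among left `B`-stable submodules with `K ∩ B ⊆ P`; the
annihilator `Q` of `A/K` is a prime ideal of `R`. Given a right ideal `F ⊇ P` essential modulo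
`P`, enlarge `K` to maximal submodules `K ≤ K⁺ ≤ K_F` with `K⁺ ∩ B ⊆ P` and `K_F ∩ B ⊆ F`. Then
`{r | 1 ↼ r ∈ K_F}` is essential modulo `Q`, so boundedness of `R/Q` gives a two-sided ideal
`T ⊄ Q` inside it, and `(K + 1 ↼ T) ∩ B` is a two-sided ideal of `B` inside `F` but not in `P`.
-/

section

variable {S : Type*} [Ring S]

variable (S) in
def opSelfLinearEquiv : S ≃ₗ[Sᵐᵒᵖ] Sᵐᵒᵖ :=
  { opAddEquiv with map_smul' := fun _ _ => rfl }

theorem isNoetherianRing_op_iff : IsNoetherianRing Sᵐᵒᵖ ↔ IsNoetherian Sᵐᵒᵖ S :=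
  (opSelfLinearEquiv S).isNoetherian_iff.symm

variable (S) in
def Module.IsQuasiProjective (M : Type*) [AddCommGroup M] [Module S M] : Prop :=
  ∀ (K : Submodule S M) (f : M →ₗ[S] M ⧸ K), ∃ g : M →ₗ[S] M, ∀ a : M, K.mkQ (g a) = f a

theorem Module.IsQuasiProjective.exists_comp_eq {M N : Type*} [AddCommGroup M] [Module S M]
    [AddCommGroup N] [Module S N] (hM : IsQuasiProjective S M) (φ ψ : M →ₗ[S] N)
    (h : LinearMap.range ψ ≤ LinearMap.range φ) : ∃ g : M →ₗ[S] M, φ ∘ₗ g = ψ := by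
  obtain ⟨g, hg⟩ := hM (LinearMap.ker φ) (φ.quotKerEquivRange.symm.toLinearMap ∘ₗ
    ψ.codRestrict _ fun a => h (LinearMap.mem_range_self ψ a))
  refine ⟨g, LinearMap.ext fun a => ?_⟩
  simpa using congrArg (fun y => (φ.quotKerEquivRange y : N)) (hg a)

theorem TwoSidedIdeal.mem_map_of_surjective {S' : Type*} [Ring S'] {f : S →+* S'}
    (hf : Function.Surjective f) (T : TwoSidedIdeal S) {y : S'} :
    y ∈ T.map f ↔ ∃ x ∈ T, f x = y := by
  refine ⟨fun hy => ?_, fun ⟨x, hx, hxy⟩ => subset_span ⟨x, hx, hxy⟩⟩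
  let image : TwoSidedIdeal S' := .mk' (f '' T) ⟨0, T.zero_mem, map_zero f⟩
    (by rintro _ _ ⟨a, ha, rfl⟩ ⟨b, hb, rfl⟩; exact ⟨a + b, T.add_mem ha hb, map_add f a b⟩)
    (by rintro _ ⟨a, ha, rfl⟩; exact ⟨-a, T.neg_mem ha, map_neg f a⟩)
    (by
      rintro x _ ⟨b, hb, rfl⟩
      obtain ⟨a, rfl⟩ := hf x
      exact ⟨a * b, T.mul_mem_left a b hb, map_mul f a b⟩)
    (by
      rintro _ y ⟨a, ha, rfl⟩
      obtain ⟨b, rfl⟩ := hf y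
      exact ⟨a * b, T.mul_mem_right a b ha, map_mul f a b⟩)
  have hle : T.map f ≤ image := span_le.2 fun z hz => (mem_mk' _ _ _ _ _ _ z).2 hz
  exact (mem_mk' _ _ _ _ _ _ y).1 (hle hy)

theorem TwoSidedIdeal.exists_ne_zero_of_ne_bot {T : TwoSidedIdeal S} (hT : T ≠ ⊥) :
    ∃ x ∈ T, x ≠ 0 := by
  by_contra! h
  exact hT (eq_bot_iff.2 fun x hx => (mem_bot S).2 (h x hx))

/-- `(F + P)/P` meets every nonzero cyclic right ideal of `S/P`, i.e. it is essential. -/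
def IsEssentialOver (P : TwoSidedIdeal S) (F : Set S) : Prop :=
  ∀ s ∉ P, ∃ t, s * t ∈ F ∧ s * t ∉ P

theorem TwoSidedIdeal.mk'_eq_zero_iff (P : TwoSidedIdeal S) {x : S} :
    P.ringCon.mk' x = 0 ↔ x ∈ P := by
  rw [← mem_ker, ker_ringCon_mk']

theorem RightBounded.exists_twoSidedIdeal_le {P : TwoSidedIdeal S}
    (hP : RightBounded P.ringCon.Quotient) {F : Submodule Sᵐᵒᵖ S} (hPF : (P : Set S) ⊆ F)
    (hF : IsEssentialOver P F) : ∃ T : TwoSidedIdeal S, ¬ T ≤ P ∧ (T : Set S) ⊆ F := by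
  set π := P.ringCon.mk'
  have hπ : Function.Surjective π := P.ringCon.mk'_surjective
  have hπ0 (x : S) : π x = 0 ↔ x ∈ P := P.mk'_eq_zero_iff
  let E : Submodule P.ringCon.Quotientᵐᵒᵖ P.ringCon.Quotient :=
    { carrier := π '' F
      add_mem' := by
        rintro _ _ ⟨a, ha, rfl⟩ ⟨b, hb, rfl⟩; exact ⟨a + b, F.add_mem ha hb, map_add π a b⟩
      zero_mem' := ⟨0, F.zero_mem, map_zero π⟩
      smul_mem' := by
        rintro c _ ⟨a, ha, rfl⟩
        obtain ⟨t, ht⟩ := hπ c.unop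
        exact ⟨a * t, F.smul_mem (op t) ha, by rw [map_mul, ht]; rfl⟩ }
  have hE : ∀ J : Submodule P.ringCon.Quotientᵐᵒᵖ P.ringCon.Quotient, J ≠ ⊥ → E ⊓ J ≠ ⊥ := by
    intro J hJ
    obtain ⟨y, hyJ, hy0⟩ := (Submodule.ne_bot_iff J).1 hJ
    obtain ⟨s, rfl⟩ := hπ y
    obtain ⟨t, hstF, hstP⟩ := hF s (mt (hπ0 s).2 hy0)
    refine (Submodule.ne_bot_iff _).2 ⟨π (s * t), ⟨⟨s * t, hstF, rfl⟩, ?_⟩, mt (hπ0 _).1 hstP⟩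
    rw [map_mul]
    exact J.smul_mem (op (π t)) hyJ
  obtain ⟨T, hT0, hTE⟩ := hP E hE
  obtain ⟨y, hyT, hy0⟩ := TwoSidedIdeal.exists_ne_zero_of_ne_bot hT0
  obtain ⟨s, rfl⟩ := hπ y
  refine ⟨T.comap π, fun h => hy0 ((hπ0 s).2 (h ((TwoSidedIdeal.mem_comap π).2 hyT))), ?_⟩
  intro x hx
  obtain ⟨f, hf, hfx⟩ := hTE _ ((TwoSidedIdeal.mem_comap π).1 hx)
  have hxf : x - f ∈ P := (hπ0 _).1 (by rw [map_sub, hfx, sub_self])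
  simpa using F.add_mem (hPF hxf) hf

theorem rightBounded_quotient_of_forall_exists {P : TwoSidedIdeal S}
    (h : ∀ F : Submodule Sᵐᵒᵖ S, (P : Set S) ⊆ F → IsEssentialOver P F →
      ∃ T : TwoSidedIdeal S, ¬ T ≤ P ∧ (T : Set S) ⊆ F) :
    RightBounded P.ringCon.Quotient := by
  intro E hE
  set π := P.ringCon.mk'
  have hπ : Function.Surjective π := P.ringCon.mk'_surjective
  have hπ0 (x : S) : π x = 0 ↔ x ∈ P := P.mk'_eq_zero_iff
  let F : Submodule Sᵐᵒᵖ S :=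
    { carrier := π ⁻¹' E
      add_mem' := fun ha hb => by simp only [Set.mem_preimage, map_add] at *; exact E.add_mem ha hb
      zero_mem' := by simp
      smul_mem' := fun c a ha => by simpa [map_mul] using E.smul_mem (op (π c.unop)) ha }
  have hF : IsEssentialOver P F := by
    intro s hs
    have hJ : Submodule.span P.ringCon.Quotientᵐᵒᵖ {π s} ≠ ⊥ := by simpa [hπ0] using hs
    obtain ⟨y, ⟨hyE, hyJ⟩, hy0⟩ := (Submodule.ne_bot_iff _).1 (hE _ hJ)
    obtain ⟨c, rfl⟩ := Submodule.mem_span_singleton.1 hyJ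
    obtain ⟨t, ht⟩ := hπ c.unop
    have hst : π (s * t) = c • π s := by rw [map_mul, ht]; rfl
    exact ⟨t, by simpa [F, hst] using hyE, fun h => hy0 (hst ▸ (hπ0 _).2 h)⟩
  obtain ⟨T, hTP, hTF⟩ := h F (fun x hx => show π x ∈ E by rw [(hπ0 x).2 hx]; exact E.zero_mem) hF
  obtain ⟨t, htT, htP⟩ := SetLike.not_le_iff_exists.1 hTP
  refine ⟨T.map π, fun h0 => htP ((hπ0 t).1 ?_), fun y hy => ?_⟩
  · exact (TwoSidedIdeal.mem_bot _).1 (h0 ▸ TwoSidedIdeal.subset_span ⟨t, htT, rfl⟩)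
  · obtain ⟨x, hx, rfl⟩ := (TwoSidedIdeal.mem_map_of_surjective hπ T).1 hy
    exact hTF hx

end

namespace Invariants

variable {R A : Type*} [Ring R] [Ring A] [Module Rᵐᵒᵖ A] {i : A →+* R} {B : Subring A}

variable (i) in
def IsRightMulAction : Prop := ∀ a c : A, op (i c) • a = a * c

variable (R B) in
/-- For `op r • a = χ (i a * r)` this is the paper's invariance condition defining `A^R`. -/
def IsCommutant : Prop :=
  ∀ b : A, b ∈ B ↔ ∀ (r : Rᵐᵒᵖ) (a : A), r • (b * a) = b * r • a

theorem IsRightMulAction.mul_mem (hi : IsRightMulAction i) {K : Submodule Rᵐᵒᵖ A} {a : A}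
    (ha : a ∈ K) (c : A) : a * c ∈ K :=
  hi a c ▸ K.smul_mem _ ha

theorem IsRightMulAction.smul_one (hi : IsRightMulAction i) (a : A) : op (i a) • (1 : A) = a := by
  rw [hi, one_mul]

theorem IsRightMulAction.smul_one_mul (hi : IsRightMulAction i) (r : R) (c : A) :
    (op r • (1 : A)) * c = op (r * i c) • (1 : A) := by
  rw [← hi, op_mul, mul_smul]

def lmul (hB : IsCommutant R B) (b : B) : A →ₗ[Rᵐᵒᵖ] A where
  toFun := ((b : A) * ·)
  map_add' := mul_add (b : A)
  map_smul' r a := ((hB b).1 b.2 r a).symm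

@[simp]
theorem lmul_apply (hB : IsCommutant R B) (b : B) (a : A) : lmul hB b a = b * a := rfl

theorem IsRightMulAction.apply_eq_mul (hi : IsRightMulAction i) (g : A →ₗ[Rᵐᵒᵖ] A) (a : A) :
    g a = g 1 * a := by
  conv_lhs => rw [← hi.smul_one a]
  rw [map_smul, hi]

theorem IsCommutant.apply_one_mem (hi : IsRightMulAction i) (hB : IsCommutant R B)
    (g : A →ₗ[Rᵐᵒᵖ] A) : g 1 ∈ B :=
  (hB _).2 fun r a => by rw [← hi.apply_eq_mul, ← hi.apply_eq_mul, map_smul]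

theorem exists_sub_mul_mem_of_mem_span_singleton_sup (hi : IsRightMulAction i)
    (hB : IsCommutant R B) (hqp : Module.IsQuasiProjective Rᵐᵒᵖ A) {K : Submodule Rᵐᵒᵖ A}
    {f b : B} (h : (b : A) ∈ Submodule.span Rᵐᵒᵖ {(f : A)} ⊔ K) :
    ∃ c : B, (b : A) - f * c ∈ K := by
  obtain ⟨y, hy, k, hk, hyk⟩ := Submodule.mem_sup.1 h
  obtain ⟨r, rfl⟩ := Submodule.mem_span_singleton.1 hy
  have hrange : LinearMap.range (K.mkQ ∘ₗ lmul hB b) ≤ LinearMap.range (K.mkQ ∘ₗ lmul hB f) := by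
    rintro _ ⟨a, rfl⟩
    refine ⟨(r • 1) * a, ?_⟩
    have hka : k * a ∈ K := hi.mul_mem hk a
    simp only [LinearMap.coe_comp, Function.comp_apply, lmul_apply, Submodule.mkQ_apply]
    have hf : r • (f : A) = f * (r • 1) := by simpa using (hB f).1 f.2 r 1
    rw [← hyk, hf, add_mul, mul_assoc]
    exact ((Submodule.Quotient.eq K).2 (by simpa using K.neg_mem hka))
  obtain ⟨g, hg⟩ := hqp.exists_comp_eq _ _ hrange
  refine ⟨⟨g 1, hB.apply_one_mem hi g⟩, ?_⟩
  have := (Submodule.Quotient.eq K).1 (LinearMap.congr_fun hg 1)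
  rw [← neg_sub]
  exact K.neg_mem (by simpa using this)

def extension (J : Submodule Bᵐᵒᵖ B) : Submodule Rᵐᵒᵖ A :=
  Submodule.span Rᵐᵒᵖ (Subtype.val '' (J : Set B))

variable (B) in
def contraction (K : Submodule Rᵐᵒᵖ A) : Set B := {b | (b : A) ∈ K}

@[simp]
theorem mem_contraction {K : Submodule Rᵐᵒᵖ A} {b : B} : b ∈ contraction B K ↔ (b : A) ∈ K :=
  Iff.rfl

theorem exists_sub_mem_of_mem_extension_sup (hi : IsRightMulAction i) (hB : IsCommutant R B)
    (hqp : Module.IsQuasiProjective Rᵐᵒᵖ A) (J : Submodule Bᵐᵒᵖ B) {K : Submodule Rᵐᵒᵖ A} {b : B}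
    (h : (b : A) ∈ extension (R := R) J ⊔ K) : ∃ j ∈ J, (b : A) - j ∈ K := by
  classical
  have of_finset : ∀ t : Finset A, (t : Set A) ⊆ Subtype.val '' (J : Set B) →
      ∀ b : B, (b : A) ∈ Submodule.span Rᵐᵒᵖ (t : Set A) ⊔ K → ∃ j ∈ J, (b : A) - j ∈ K := by
    intro t
    induction t using Finset.induction_on with
    | empty => exact fun _ b hb => ⟨0, J.zero_mem, by simpa using hb⟩
    | insert f s _ ih =>
      intro hfs b hb
      obtain ⟨f, hfJ, rfl⟩ := hfs (Finset.mem_insert_self _ _)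
      rw [Finset.coe_insert, Submodule.span_insert, sup_assoc] at hb
      obtain ⟨c, hc⟩ := exists_sub_mul_mem_of_mem_span_singleton_sup hi hB hqp hb
      obtain ⟨j, hjJ, hj⟩ := ih (fun x hx => hfs (Finset.mem_insert_of_mem hx)) (b - f * c) hc
      exact ⟨f * c + j, J.add_mem (J.smul_mem (op c) hfJ) hjJ, by simpa [sub_sub] using hj⟩
  obtain ⟨y, hy, k, hk, hyk⟩ := Submodule.mem_sup.1 h
  obtain ⟨t, htJ, hyt⟩ := Submodule.mem_span_finite_of_mem_span hy
  exact of_finset t htJ b (hyk ▸ Submodule.add_mem_sup hyt hk)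

theorem contraction_extension (hi : IsRightMulAction i) (hB : IsCommutant R B)
    (hqp : Module.IsQuasiProjective Rᵐᵒᵖ A) (J : Submodule Bᵐᵒᵖ B) :
    contraction B (extension (R := R) J) = J := by
  ext b
  refine ⟨fun hb => ?_, fun hb => Submodule.subset_span ⟨b, hb, rfl⟩⟩
  obtain ⟨j, hj, hbj⟩ := exists_sub_mem_of_mem_extension_sup hi hB hqp J
    (K := ⊥) (by simpa using hb)
  rw [Submodule.mem_bot, sub_eq_zero] at hbj
  exact Subtype.ext hbj ▸ hj

theorem IsRightMulAction.isNoetherian (hi : IsRightMulAction i) [IsNoetherian Aᵐᵒᵖ A] :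
    IsNoetherian Rᵐᵒᵖ A := by
  let toRightIdeal : Submodule Rᵐᵒᵖ A ↪o Submodule Aᵐᵒᵖ A :=
    OrderEmbedding.ofMapLEIff
      (fun K => { K.toAddSubmonoid with smul_mem' := fun c _ ha => hi.mul_mem ha c.unop })
      fun _ _ => Iff.rfl
  exact isNoetherian_mk toRightIdeal.strictMono.wellFoundedGT

theorem IsCommutant.isNoetherian (hi : IsRightMulAction i) (hB : IsCommutant R B)
    (hqp : Module.IsQuasiProjective Rᵐᵒᵖ A) [IsNoetherian Rᵐᵒᵖ A] : IsNoetherian Bᵐᵒᵖ B := by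
  have hmono : Monotone (extension (R := R) (B := B)) :=
    fun _ _ h => Submodule.span_mono (Set.image_mono h)
  have hinj : Function.Injective (extension (R := R) (B := B)) := fun J J' h => by
    rw [← SetLike.coe_set_eq, ← contraction_extension hi hB hqp J,
      ← contraction_extension hi hB hqp J', h]
  exact isNoetherian_mk (hmono.strictMono_of_injective hinj).wellFoundedGT

def quotAnnihilator {M : Type*} [AddCommGroup M] [Module Rᵐᵒᵖ M] (K : Submodule Rᵐᵒᵖ M) :
    TwoSidedIdeal R :=
  .mk' {r | ∀ m, op r • m ∈ K} (fun m => by simp)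
    (fun hr hs m => by rw [op_add, add_smul]; exact K.add_mem (hr m) (hs m))
    (fun hr m => by rw [op_neg, neg_smul]; exact K.neg_mem (hr m))
    (fun {x _} hr m => by rw [op_mul, mul_smul]; exact hr _)
    (fun {_ y} hr m => by rw [op_mul, mul_smul]; exact K.smul_mem _ (hr m))

theorem mem_quotAnnihilator {M : Type*} [AddCommGroup M] [Module Rᵐᵒᵖ M] {K : Submodule Rᵐᵒᵖ M}
    {r : R} : r ∈ quotAnnihilator K ↔ ∀ m, op r • m ∈ K :=
  TwoSidedIdeal.mem_mk' ..

def colonLeftSpan {M : Type*} [AddCommGroup M] [Module Rᵐᵒᵖ M] (K : Submodule Rᵐᵒᵖ M) (v : R) :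
    Submodule Rᵐᵒᵖ M where
  carrier := {m | ∀ x : R, op (x * v) • m ∈ K}
  add_mem' ha hb x := by rw [smul_add]; exact K.add_mem (ha x) (hb x)
  zero_mem' x := by rw [smul_zero]; exact K.zero_mem
  smul_mem' c m hm x := by rw [← mul_smul, ← op_unop c, ← op_mul, ← mul_assoc]; exact hm _

variable (R A) in
def smulOne : R →ₗ[Rᵐᵒᵖ] A where
  toFun r := op r • (1 : A)
  map_add' r s := by rw [op_add, add_smul]
  map_smul' c r := by rw [RingHom.id_apply, ← mul_smul]; rfl

@[simp]
theorem smulOne_apply (r : R) : smulOne R A r = op r • (1 : A) := rfl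

variable (B) in
def LeftMulStable (K : Submodule Rᵐᵒᵖ A) : Prop :=
  ∀ b : B, ∀ x ∈ K, (b : A) * x ∈ K

theorem LeftMulStable.sup_span (hB : IsCommutant R B) {K : Submodule Rᵐᵒᵖ A}
    (hK : LeftMulStable B K) {S : Set A} (hS : ∀ b : B, ∀ s ∈ S, (b : A) * s ∈ S) :
    LeftMulStable B (K ⊔ Submodule.span Rᵐᵒᵖ S) := by
  intro b
  suffices K ⊔ Submodule.span Rᵐᵒᵖ S ≤ (K ⊔ Submodule.span Rᵐᵒᵖ S).comap (lmul hB b) from this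
  exact sup_le (fun x hx => Submodule.mem_sup_left (hK b x hx))
    (Submodule.span_le.2 fun s hs => Submodule.mem_sup_right (Submodule.subset_span (hS b s hs)))

theorem LeftMulStable.colonLeftSpan (hB : IsCommutant R B) {K : Submodule Rᵐᵒᵖ A}
    (hK : LeftMulStable B K) (v : R) : LeftMulStable B (colonLeftSpan K v) :=
  fun b a ha x => by rw [(hB b).1 b.2]; exact hK b _ (ha x)

theorem exists_eq_add_smul_of_maximal {X : Set B} {M : Submodule Rᵐᵒᵖ A}
    (hM : Maximal (fun K => contraction B K ⊆ X) M) {x : A} (hx : x ∉ M) :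
    ∃ b : B, b ∉ X ∧ ∃ m ∈ M, ∃ r : R, (b : A) = m + op r • x := by
  have hlt : M < M ⊔ Submodule.span Rᵐᵒᵖ {x} :=
    left_lt_sup.2 fun h => hx (h (Submodule.mem_span_singleton_self x))
  obtain ⟨b, hb, hbX⟩ := Set.not_subset.1 (hM.not_prop_of_gt hlt)
  obtain ⟨m, hm, y, hy, hmy⟩ := Submodule.mem_sup.1 hb
  obtain ⟨c, rfl⟩ := Submodule.mem_span_singleton.1 hy
  exact ⟨b, hbX, m, hm, c.unop, hmy.symm⟩

theorem isPrimeTSI_quotAnnihilator (hi : IsRightMulAction i) (hB : IsCommutant R B)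
    {P : TwoSidedIdeal B} (hP : P.IsPrimeTSI) {K : Submodule Rᵐᵒᵖ A}
    (hK : Maximal (fun K => LeftMulStable B K ∧ contraction B K ⊆ P) K) :
    (quotAnnihilator K).IsPrimeTSI := by
  obtain ⟨hKB, hKP⟩ := hK.prop
  refine ⟨fun htop => hP.1 ?_, fun u v huv => ?_⟩
  · have h1 : (1 : A) ∈ K := by
      simpa using mem_quotAnnihilator.1 (TwoSidedIdeal.one_mem _ htop) 1
    exact TwoSidedIdeal.eq_top _ (hKP (show (1 : B) ∈ contraction B K from h1))
  by_contra! huv'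
  obtain ⟨hu, hv⟩ := huv'
  have hKU : K < colonLeftSpan K v := by
    refine lt_of_le_of_ne (fun a ha x => K.smul_mem _ ha) fun hKU => hu ?_
    refine mem_quotAnnihilator.2 fun a => hKU ▸ fun x => ?_
    simpa only [← mul_smul, ← op_mul, mul_assoc] using mem_quotAnnihilator.1 (huv x) a
  obtain ⟨b₀, hb₀U, hb₀P⟩ :=
    Set.not_subset.1 fun h => hK.not_prop_of_gt hKU ⟨hKB.colonLeftSpan hB v, h⟩
  set W := K ⊔ Submodule.span Rᵐᵒᵖ (Set.range (op v • · : A → A))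
  have hKW : K < W :=
    left_lt_sup.2 fun h => hv (mem_quotAnnihilator.2 fun a => h (Submodule.subset_span ⟨a, rfl⟩))
  have hWB : LeftMulStable B W :=
    hKB.sup_span hB (by rintro b _ ⟨a, rfl⟩; exact ⟨b * a, (hB b).1 b.2 _ a⟩)
  obtain ⟨b₁, hb₁W, hb₁P⟩ := Set.not_subset.1 fun h => hK.not_prop_of_gt hKW ⟨hWB, h⟩
  obtain ⟨s, hs⟩ : ∃ s : B, b₀ * s * b₁ ∉ P := by
    by_contra! h
    exact (hP.2 _ _ h).elim hb₀P hb₁P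
  have hb₂ : ((b₀ * s : B) : A) ∈ colonLeftSpan K v := hi.mul_mem hb₀U s
  have hW : W ≤ K.comap (lmul hB (b₀ * s)) := by
    refine sup_le (fun x hx => hKB _ x hx) (Submodule.span_le.2 ?_)
    rintro _ ⟨a, rfl⟩
    show ((b₀ * s : B) : A) * (op v • a) ∈ K
    rw [← (hB _).1 (b₀ * s).2, ← hi, ← mul_smul, ← op_mul]
    exact hb₂ (i a)
  exact hs (hKP (by simpa using hW hb₁W))

theorem isEssentialOver_comap_smulOne (hi : IsRightMulAction i) {P : TwoSidedIdeal B}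
    {F : Submodule Bᵐᵒᵖ B} (hF : IsEssentialOver P F) {K Kp KF : Submodule Rᵐᵒᵖ A}
    (hKKp : K ≤ Kp) (hKp : Maximal (fun K => contraction B K ⊆ P) Kp) (hKpKF : Kp ≤ KF)
    (hFKF : (F : Set B) ⊆ contraction B KF) (hKF : Maximal (fun K => contraction B K ⊆ F) KF) :
    IsEssentialOver (quotAnnihilator K) (KF.comap (smulOne R A)) := by
  intro s hs
  by_contra! hsQ
  have hs1 : op s • (1 : A) ∉ KF := fun h => hs (by simpa using hsQ 1 (by simpa using h))
  obtain ⟨b, hbF, m, hm, ρ, hb⟩ := exists_eq_add_smul_of_maximal hKF hs1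
  have hsρ : op (s * ρ) • (1 : A) ∉ Kp := fun h => hbF <| hKF.prop <| by
    rw [mem_contraction, hb, ← mul_smul, ← op_mul]
    exact KF.add_mem hm (hKpKF h)
  obtain ⟨b₃, hb₃P, k, hk, ρ', hb₃⟩ := exists_eq_add_smul_of_maximal hKp hsρ
  -- `b₃ ∉ P`, yet every `b₃ * β ∈ F` lies in `P`: this contradicts essentiality of `F`.
  obtain ⟨β, hβF, hβP⟩ := hF b₃ hb₃P
  have hsplit : ((b₃ * β : B) : A) = k * β + op (s * (ρ * ρ' * i β)) • (1 : A) := by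
    rw [Subring.coe_mul, hb₃, add_mul, ← mul_smul, ← op_mul, hi.smul_one_mul]
    simp only [mul_assoc]
  have hkβ : k * β ∈ Kp := hi.mul_mem hk β
  have hQ : s * (ρ * ρ' * i β) ∈ quotAnnihilator K := hsQ _ <| by
    have := KF.sub_mem (hFKF hβF) (hKpKF hkβ)
    rwa [hsplit, add_sub_cancel_left] at this
  refine hβP (hKp.prop ?_)
  rw [mem_contraction, hsplit]
  exact Kp.add_mem hkβ (hKKp (mem_quotAnnihilator.1 hQ 1))

def contractionIdeal (hi : IsRightMulAction i) {K : Submodule Rᵐᵒᵖ A} (hK : LeftMulStable B K) :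
    TwoSidedIdeal B :=
  .mk' (contraction B K) (by simp) (fun ha hb => K.add_mem ha hb) (fun ha => K.neg_mem ha)
    (fun {x _} hy => hK x _ hy) (fun {_ y} hx => hi.mul_mem hx y)

theorem mem_contractionIdeal (hi : IsRightMulAction i) {K : Submodule Rᵐᵒᵖ A}
    (hK : LeftMulStable B K) {b : B} : b ∈ contractionIdeal hi hK ↔ (b : A) ∈ K :=
  TwoSidedIdeal.mem_mk' ..

theorem exists_twoSidedIdeal_of_not_le_quotAnnihilator (hi : IsRightMulAction i)
    (hB : IsCommutant R B) {P : TwoSidedIdeal B} {F : Set B} {K KF : Submodule Rᵐᵒᵖ A}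
    (hK : Maximal (fun K => LeftMulStable B K ∧ contraction B K ⊆ P) K) (hKKF : K ≤ KF)
    (hKF : contraction B KF ⊆ F) {T : TwoSidedIdeal R} (hTK : ¬ T ≤ quotAnnihilator K)
    (hT : (T : Set R) ⊆ KF.comap (smulOne R A)) :
    ∃ T' : TwoSidedIdeal B, ¬ T' ≤ P ∧ (T' : Set B) ⊆ F := by
  set X := K ⊔ Submodule.span Rᵐᵒᵖ (smulOne R A '' T)
  have hXB : LeftMulStable B X := hK.prop.1.sup_span hB <| by
    rintro b _ ⟨τ, hτ, rfl⟩
    refine ⟨i b * τ, T.mul_mem_left _ _ hτ, ?_⟩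
    rw [smulOne_apply, smulOne_apply, ← (hB b).1 b.2, mul_one, op_mul, mul_smul, hi.smul_one]
  have hKX : K < X := left_lt_sup.2 fun h => hTK fun τ hτ => mem_quotAnnihilator.2 fun a => by
    have := h (Submodule.subset_span ⟨i a * τ, T.mul_mem_left _ _ hτ, rfl⟩)
    rwa [smulOne_apply, op_mul, mul_smul, hi.smul_one] at this
  obtain ⟨b, hbX, hbP⟩ := Set.not_subset.1 fun h => hK.not_prop_of_gt hKX ⟨hXB, h⟩
  have hXKF : X ≤ KF := sup_le hKKF (Submodule.span_le.2 (by rintro _ ⟨τ, hτ, rfl⟩; exact hT hτ))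
  refine ⟨contractionIdeal hi hXB, fun h => hbP (h ((mem_contractionIdeal hi hXB).2 hbX)), ?_⟩
  exact fun b hb => hKF (hXKF ((mem_contractionIdeal hi hXB).1 hb))

theorem exists_twoSidedIdeal_le_of_isEssentialOver (hi : IsRightMulAction i)
    (hB : IsCommutant R B) (hqp : Module.IsQuasiProjective Rᵐᵒᵖ A) [IsNoetherian Rᵐᵒᵖ A]
    (hR : RightFBN R) {P : TwoSidedIdeal B} (hP : P.IsPrimeTSI) (F : Submodule Bᵐᵒᵖ B)
    (hPF : (P : Set B) ⊆ F) (hF : IsEssentialOver P F) :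
    ∃ T : TwoSidedIdeal B, ¬ T ≤ P ∧ (T : Set B) ⊆ F := by
  obtain ⟨K, -, hK⟩ := exists_maximal_ge_of_wellFoundedGT
    (fun K : Submodule Rᵐᵒᵖ A => LeftMulStable B K ∧ contraction B K ⊆ P) ⊥
    ⟨fun b x hx => by simp_all, fun b hb => by simp_all [P.zero_mem]⟩
  obtain ⟨Kp, hKKp, hKp⟩ :=
    exists_maximal_ge_of_wellFoundedGT (fun K => contraction B K ⊆ P) K hK.prop.2
  have hF₀ : contraction B (extension (R := R) F ⊔ Kp) ⊆ F := fun b hb => by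
    obtain ⟨f, hf, hbf⟩ := exists_sub_mem_of_mem_extension_sup hi hB hqp F hb
    simpa using F.add_mem (hPF (hKp.prop (show b - f ∈ contraction B Kp by simpa using hbf))) hf
  obtain ⟨KF, hKF₀, hKF⟩ := exists_maximal_ge_of_wellFoundedGT (fun K => contraction B K ⊆ F) _ hF₀
  have hKpKF : Kp ≤ KF := le_sup_right.trans hKF₀
  have hFKF : (F : Set B) ⊆ contraction B KF :=
    fun f hf => hKF₀ (Submodule.mem_sup_left (Submodule.subset_span ⟨f, hf, rfl⟩))
  obtain ⟨T, hTK, hT⟩ := (hR.2 _ (isPrimeTSI_quotAnnihilator hi hB hP hK)).exists_twoSidedIdeal_le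
    (F := KF.comap (smulOne R A))
    (fun r hr => (hKKp.trans hKpKF) (by simpa using mem_quotAnnihilator.1 hr 1))
    (isEssentialOver_comap_smulOne hi hF hKKp hKp hKpKF hFKF hKF)
  exact exists_twoSidedIdeal_of_not_le_quotAnnihilator hi hB hK (hKKp.trans hKpKF) hKF.prop hTK hT

theorem rightFBN_of_isCommutant (hi : IsRightMulAction i) (hB : IsCommutant R B)
    (hqp : Module.IsQuasiProjective Rᵐᵒᵖ A) [IsNoetherian Rᵐᵒᵖ A] (hR : RightFBN R) :
    RightFBN B :=
  ⟨isNoetherianRing_op_iff.2 (hB.isNoetherian hi hqp), fun _ hP =>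
    rightBounded_quotient_of_forall_exists fun F hPF hF =>
      exists_twoSidedIdeal_le_of_isEssentialOver hi hB hqp hR hP F hPF hF⟩

end Invariants

theorem invariants_rightFBN_descent_general
    {A R : Type u} [Ring A] [Ring R] (i : A →+* R) (χ : R →+ A)
    -- A as a right R-module
    [Module Rᵐᵒᵖ A]
    (hsmul : ∀ (r : R) (a : A), op r • a = χ (i a * r))
    -- A is quasi-projective as a right R-module
    (hqp : ∀ (K : Submodule Rᵐᵒᵖ A) (f : A →ₗ[Rᵐᵒᵖ] A ⧸ K),
      ∃ g : A →ₗ[Rᵐᵒᵖ] A, ∀ a : A, K.mkQ (g a) = f a)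
    -- the subring of invariants
    (B : Subring A)
    (hB : ∀ b : A, b ∈ B ↔ ∀ r : R, χ (i b * r) = b * χ r)
    (hR : RightFBN R)
    (hAnoeth : IsNoetherianRing Aᵐᵒᵖ) :
    RightFBN B := by
  have hχi (a : A) : χ (i a) = a := by simpa using (hsmul 1 a).symm
  have hi : Invariants.IsRightMulAction i := fun a c => by rw [hsmul, ← map_mul, hχi]
  have hB' : Invariants.IsCommutant R B := fun b => by
    rw [hB]
    refine ⟨fun h r a => ?_, fun h r => by simpa [hsmul] using h (op r) 1⟩
    rw [← op_unop r, hsmul, hsmul, i.map_mul, mul_assoc, h]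
  have := isNoetherianRing_op_iff.1 hAnoeth
  have := hi.isNoetherian
  exact Invariants.rightFBN_of_isCommutant hi hB' hqp hR

/-- Let `(R, i, χ)` be an `A`-ring with a right grouplike character,
and assume that `A` is quasi-projective as a right `R`-module via `a ↼ r = χ (i a * r)`.
If `R` is right FBN and `A` is right noetherian, then the subring of invariants
`B = A^R = {b : A | χ (i b * r) = b * χ r for all r}` is right FBN. -/
theorem invariants_rightFBN_descent
    {A R : Type u} [Ring A] [Ring R] (i : A →+* R) (χ : R →+ A)
    (hχA : ∀ (r : R) (a : A), χ (r * i a) = χ r * a)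
    (hχmul : ∀ r s : R, χ (i (χ r) * s) = χ (r * s))
    (hχone : χ (1 : R) = 1)
    -- A as a right R-module
    [Module Rᵐᵒᵖ A]
    (hsmul : ∀ (r : R) (a : A), op r • a = χ (i a * r))
    -- A is quasi-projective as a right R-module
    (hqp : ∀ (K : Submodule Rᵐᵒᵖ A) (f : A →ₗ[Rᵐᵒᵖ] A ⧸ K),
      ∃ g : A →ₗ[Rᵐᵒᵖ] A, ∀ a : A, K.mkQ (g a) = f a)
    -- the subring of invariants
    (B : Subring A)
    (hB : ∀ b : A, b ∈ B ↔ ∀ r : R, χ (i b * r) = b * χ r)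
    (hR : RightFBN R)
    (hAnoeth : IsNoetherianRing Aᵐᵒᵖ) :
    RightFBN B :=
  invariants_rightFBN_descent_general i χ hsmul hqp B hB hR hAnoeth
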